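/- arXiv:2009.06274 — 4 statements merged into one kernel-verified Lean document; each statement's English description precedes it below -/
import Mathlib

section
/- Let G be a reductive group with maximal torus T_G and Weyl group W_G. There is a short exact sequence of lattices 0 → Bil^{s}(Λ(G^{ab})) → Bil^{s,D-ev}(Λ(T_G))^{W_G} → Bil^{s,ev}(Λ(T_{D(G)}) | Λ(T_{G^{ss}}))^{W_G} → 0, where the first map is pull-back along the projection Λ(T_G) ↠ Λ(G^{ab}) and the second map is restriction to Λ(T_{D(G)}). -/
/-! For a `W`-invariant form the cross terms `b (pab u) (pss v)` vanish, since averaging over the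
finite group `W` kills the semisimple part; hence such a form is the orthogonal sum of its
abelian and semisimple parts, which gives exactness in the middle.
For surjectivity, the image `pab Λ` is a free `ℤ`-module, so a `ℚ`-linear `σ` lifts it back into
`Λ`. Given `c`, the form `c x y - c (σ (pab x)) (σ (pab y))` has the same semisimple part, and
it is integral on `Λ` because `x - σ (pab x)` lies in `Λ ∩ ker pab`, where `c` is integral. -/

/-- `q : ℚ` is an integer. -/
def IsIntQ (q : ℚ) : Prop := ∃ m : ℤ, q = (m : ℚ)

theorem IsIntQ.add {a b : ℚ} (ha : IsIntQ a) (hb : IsIntQ b) : IsIntQ (a + b) := by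
  obtain ⟨m, rfl⟩ := ha
  obtain ⟨n, rfl⟩ := hb
  exact ⟨m + n, by push_cast; rfl⟩

theorem LinearIndependent.exists_linearMap_apply_eq {K ι U V : Type*} [Field K]
    [AddCommGroup U] [Module K U] [AddCommGroup V] [Module K V]
    {e : ι → U} (he : LinearIndependent K e) (z : ι → V) :
    ∃ σ : U →ₗ[K] V, ∀ i, σ (e i) = z i := by
  obtain ⟨σ, hσ⟩ := LinearMap.exists_extend ((Module.Basis.span he).constr K z)
  refine ⟨σ, fun i => ?_⟩
  have := congr($hσ (Module.Basis.span he i))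
  rwa [LinearMap.comp_apply, Module.Basis.constr_basis, Submodule.subtype_apply,
    Module.Basis.span_apply] at this

theorem Submodule.exists_linearMap_lift_on_map {U V : Type*} [AddCommGroup U] [Module ℚ U]
    [AddCommGroup V] [Module ℚ V] (p : V →ₗ[ℚ] U) (Λ : Submodule ℤ V) [Module.Finite ℤ Λ] :
    ∃ σ : U →ₗ[ℚ] V, ∀ x ∈ Λ, σ (p x) ∈ Λ ∧ p (σ (p x)) = p x := by
  let M := Λ.map (p.restrictScalars ℤ)
  have : Module.Finite ℤ M := Module.Finite.map Λ _
  have : Module.IsTorsionFree ℤ U := .trans_faithfulSMul ℤ ℚ U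
  let e := Module.Free.chooseBasis ℤ M
  have hli : LinearIndependent ℚ (fun i => (e i : U)) :=
    (LinearIndependent.iff_fractionRing ℤ ℚ).mp (e.linearIndependent.map' M.subtype M.ker_subtype)
  choose z hzΛ hz using fun i => Submodule.mem_map.mp (e i).2
  obtain ⟨σ, hσ⟩ := hli.exists_linearMap_apply_eq z
  refine ⟨σ, fun x hx => ?_⟩
  obtain ⟨m, hpx⟩ : ∃ m : _ → ℤ, p x = ∑ i, m i • (e i : U) := by
    have := congrArg Subtype.val (e.sum_repr ⟨p x, x, hx, rfl⟩)
    simp only [Submodule.coe_sum, Submodule.coe_smul] at this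
    exact ⟨_, this.symm⟩
  have hσpx : σ (p x) = ∑ i, m i • z i := by
    simp only [hpx, map_sum, map_zsmul, hσ]
  refine ⟨hσpx ▸ Submodule.sum_mem _ fun i _ => Submodule.smul_mem _ _ (hzΛ i), ?_⟩
  rw [hσpx, hpx]
  simp only [map_sum, map_zsmul]
  exact Finset.sum_congr rfl fun i _ => congrArg _ (hz i)

/-- The canonical splitting `Λ(T_G)_ℚ = Λ(T_G)^{ab}_ℚ ⊕ Λ(T_G)^{ss}_ℚ` into the images of `pab`
and `pss`: the Weyl group acts trivially on the first summand, and the second summand contains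
no nonzero invariant vector. -/
structure IsAbSsSplitting (W : Type*) {V : Type*} [Group W] [AddCommGroup V] [Module ℚ V]
    [DistribMulAction W V] (pab pss : V →ₗ[ℚ] V) : Prop where
  add_eq : ∀ v, pab v + pss v = v
  pab_pss : ∀ v, pab (pss v) = 0
  smul_pab : ∀ (w : W) (v : V), w • pab v = pab v
  pss_smul : ∀ (w : W) (v : V), pss (w • v) = w • pss v
  pss_eq_zero_of_fixed : ∀ v : V, (∀ w : W, w • v = v) → pss v = 0

namespace IsAbSsSplitting

variable {W V : Type*} [Group W] [AddCommGroup V] [Module ℚ V] [DistribMulAction W V]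
  {pab pss : V →ₗ[ℚ] V} (h : IsAbSsSplitting W pab pss)
include h

theorem pss_eq_self {v : V} (hv : pab v = 0) : pss v = v := by
  simpa [hv] using h.add_eq v

theorem pab_smul (w : W) (v : V) : pab (w • v) = pab v := by
  have hsub : ∀ v, pab v = v - pss v := fun v => eq_sub_of_add_eq (h.add_eq v)
  rw [hsub, h.pss_smul, ← smul_sub, ← hsub, h.smul_pab]

theorem pullback_smul {b : V →ₗ[ℚ] V →ₗ[ℚ] ℚ} (hb : ∀ x y, b x y = b (pab x) (pab y))
    (w : W) (x y : V) : b (w • x) (w • y) = b x y := by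
  rw [hb, h.pab_smul, h.pab_smul, ← hb]

/-- Averaging `pss v` over `W` gives `pss` of an invariant vector, i.e. `0`, while `b (pab u)`
is constant along `W`-orbits. -/
theorem form_pab_pss [Finite W] {b : V →ₗ[ℚ] V →ₗ[ℚ] ℚ}
    (hb : ∀ (w : W) (x y : V), b (w • x) (w • y) = b x y) (u v : V) :
    b (pab u) (pss v) = 0 := by
  have := Fintype.ofFinite W
  have hfixed : ∀ g : W, g • ∑ w : W, w • v = ∑ w : W, w • v := fun g => by
    simpa [Finset.smul_sum, mul_smul] using Equiv.sum_comp (Equiv.mulLeft g) (fun w : W => w • v)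
  have hconst : ∀ w : W, b (pab u) (pss (w • v)) = b (pab u) (pss v) := fun w => by
    rw [h.pss_smul]
    conv_lhs => rw [← h.smul_pab w u]
    exact hb w _ _
  have haverage : ∑ w : W, b (pab u) (pss (w • v)) = 0 := by
    rw [← map_sum, ← map_sum, h.pss_eq_zero_of_fixed _ hfixed, map_zero]
  simpa [hconst, Fintype.card_ne_zero] using haverage

theorem form_eq_add [Finite W] {b : V →ₗ[ℚ] V →ₗ[ℚ] ℚ} (hsym : ∀ x y, b x y = b y x)
    (hb : ∀ (w : W) (x y : V), b (w • x) (w • y) = b x y) (x y : V) :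
    b x y = b (pab x) (pab y) + b (pss x) (pss y) := by
  conv_lhs => rw [← h.add_eq x, ← h.add_eq y]
  simp only [map_add, LinearMap.add_apply]
  rw [h.form_pab_pss hb, hsym (pss x), h.form_pab_pss hb]
  ring

theorem form_pss_eq_zero_iff [Finite W] {b : V →ₗ[ℚ] V →ₗ[ℚ] ℚ} (hsym : ∀ x y, b x y = b y x)
    (hb : ∀ (w : W) (x y : V), b (w • x) (w • y) = b x y) :
    (∀ x y, b (pss x) (pss y) = 0) ↔ ∀ x y, b x y = b (pab x) (pab y) := by
  refine ⟨fun h0 x y => by rw [h.form_eq_add hsym hb, h0, add_zero], fun hab x y => ?_⟩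
  rw [hab, h.pab_pss, h.pab_pss, map_zero]

theorem form_pss_right [Finite W] {b : V →ₗ[ℚ] V →ₗ[ℚ] ℚ} (hsym : ∀ x y, b x y = b y x)
    (hb : ∀ (w : W) (x y : V), b (w • x) (w • y) = b x y) {x : V} (hx : pab x = 0) (y : V) :
    b x (pss y) = b x y := by
  rw [h.form_eq_add hsym hb x y, hx, map_zero, LinearMap.zero_apply, zero_add, h.pss_eq_self hx]

theorem exists_form_pss_eq (Λ : Submodule ℤ V) [Module.Finite ℤ Λ] {c : V →ₗ[ℚ] V →ₗ[ℚ] ℚ}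
    (hc : ∀ x y, c x y = c (pss x) (pss y)) (hsym : ∀ x y, c x y = c y x)
    (hcW : ∀ (w : W) (x y : V), c (w • x) (w • y) = c x y)
    (hint : ∀ x ∈ Λ, pab x = 0 → ∀ y ∈ Λ, IsIntQ (c x (pss y)))
    (heven : ∀ x ∈ Λ, pab x = 0 → ∃ m : ℤ, c x x = 2 * m) :
    ∃ b : V →ₗ[ℚ] V →ₗ[ℚ] ℚ,
      (∀ x y, b x y = b y x) ∧
      (∀ (w : W) (x y : V), b (w • x) (w • y) = b x y) ∧
      (∀ x ∈ Λ, ∀ y ∈ Λ, IsIntQ (b x y)) ∧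
      (∀ x ∈ Λ, pab x = 0 → ∃ m : ℤ, b x x = 2 * m) ∧
      ∀ x y, b (pss x) (pss y) = c x y := by
  obtain ⟨σ, hσ⟩ := Λ.exists_linearMap_lift_on_map pab
  let s := σ ∘ₗ pab
  have hs_smul (w : W) (x : V) : s (w • x) = s x := by
    simp only [s, LinearMap.comp_apply, h.pab_smul]
  have hs_pss (x : V) : s (pss x) = 0 := by
    simp only [s, LinearMap.comp_apply, h.pab_pss, map_zero]
  have hs_ker {x : V} (hx : pab x = 0) : s x = 0 := by
    simp only [s, LinearMap.comp_apply, hx, map_zero]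
  have hsub_mem {x : V} (hx : x ∈ Λ) : x - s x ∈ Λ ∧ pab (x - s x) = 0 :=
    ⟨Λ.sub_mem hx (hσ x hx).1, by rw [map_sub, LinearMap.comp_apply, (hσ x hx).2, sub_self]⟩
  have hint' {x : V} (hx : x ∈ Λ) (hx0 : pab x = 0) {y : V} (hy : y ∈ Λ) : IsIntQ (c x y) := by
    rw [hc, h.pss_eq_self hx0]
    exact hint x hx hx0 y hy
  refine ⟨c - c.compl₁₂ s s, fun x y => ?_, fun w x y => ?_, fun x hx y hy => ?_,
    fun x hx hx0 => ?_, fun x y => ?_⟩ <;>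
    simp only [LinearMap.sub_apply, LinearMap.compl₁₂_apply]
  · rw [hsym, hsym (s x)]
  · rw [hcW, hs_smul, hs_smul]
  · have : c x y - c (s x) (s y) = c (x - s x) y + c (y - s y) (s x) := by
      rw [hsym (y - s y)]
      simp only [map_sub, LinearMap.sub_apply]
      ring
    rw [this]
    exact (hint' (hsub_mem hx).1 (hsub_mem hx).2 hy).add
      (hint' (hsub_mem hy).1 (hsub_mem hy).2 (hσ x hx).1)
  · simpa [hs_ker hx0] using heven x hx hx0
  · rw [hs_pss, hs_pss, map_zero, sub_zero, ← hc]

end IsAbSsSplitting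

/-- Here `V = Λ(T_G)_ℚ`, `Λ = Λ(T_G)`, `Λ(T_{D(G)}) = Λ ∩ ker pab` and `Λ(T_{G^{ss}}) = pss Λ`;
a form on `Λ(G^{ab})` is encoded as a form on `V` factoring through `pab`, and a form on
`Λ(T_{D(G)})` as one factoring through `pss`. -/
theorem stmt6_general (W V : Type*) [Group W] [Finite W]
    [AddCommGroup V] [Module ℚ V]
    [DistribMulAction W V]
    (Λ : Submodule ℤ V) [Module.Finite ℤ Λ]
    (pab pss : V →ₗ[ℚ] V)
    (hsum : ∀ v, pab v + pss v = v)
    (habss : ∀ v, pab (pss v) = 0)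
    (hWtriv : ∀ (w : W) (v : V), w • pab v = pab v)
    (hWeq : ∀ (w : W) (v : V), pss (w • v) = w • pss v)
    (hfix : ∀ v : V, (∀ w : W, w • v = v) → pss v = 0) :
    -- (i) pull-backs of integral symmetric forms on Λ(G^{ab}) land in the middle group
    (∀ b : V →ₗ[ℚ] V →ₗ[ℚ] ℚ,
      (∀ x y, b x y = b y x) → (∀ x y, b x y = b (pab x) (pab y)) →
      (∀ x ∈ Λ, ∀ y ∈ Λ, IsIntQ (b x y)) →
      ((∀ (w : W) (x y : V), b (w • x) (w • y) = b x y) ∧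
        ∀ x ∈ Λ, pab x = 0 → ∃ m : ℤ, b x x = 2 * m)) ∧
    -- (ii) exactness in the middle: restriction vanishes iff the form is a pull-back
    (∀ b : V →ₗ[ℚ] V →ₗ[ℚ] ℚ,
      (∀ x y, b x y = b y x) →
      (∀ (w : W) (x y : V), b (w • x) (w • y) = b x y) →
      (∀ x ∈ Λ, ∀ y ∈ Λ, IsIntQ (b x y)) →
      (∀ x ∈ Λ, pab x = 0 → ∃ m : ℤ, b x x = 2 * m) →
      ((∀ x y, b (pss x) (pss y) = 0) ↔ ∀ x y, b x y = b (pab x) (pab y))) ∧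
    -- (iii) the restriction of a middle form is even on Λ_D and integral on Λ_D ⊗ Λ_ss
    (∀ b : V →ₗ[ℚ] V →ₗ[ℚ] ℚ,
      (∀ x y, b x y = b y x) →
      (∀ (w : W) (x y : V), b (w • x) (w • y) = b x y) →
      (∀ x ∈ Λ, ∀ y ∈ Λ, IsIntQ (b x y)) →
      (∀ x ∈ Λ, pab x = 0 → ∃ m : ℤ, b x x = 2 * m) →
      ((∀ x ∈ Λ, pab x = 0 → ∀ y ∈ Λ, IsIntQ (b x (pss y))) ∧
        ∀ x ∈ Λ, pab x = 0 → ∃ m : ℤ, b (pss x) (pss x) = 2 * m)) ∧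
    -- (iv) surjectivity of the restriction map
    (∀ c : V →ₗ[ℚ] V →ₗ[ℚ] ℚ,
      (∀ x y, c x y = c (pss x) (pss y)) →
      (∀ x y, c x y = c y x) →
      (∀ (w : W) (x y : V), c (w • x) (w • y) = c x y) →
      (∀ x ∈ Λ, pab x = 0 → ∀ y ∈ Λ, IsIntQ (c x (pss y))) →
      (∀ x ∈ Λ, pab x = 0 → ∃ m : ℤ, c x x = 2 * m) →
      ∃ b : V →ₗ[ℚ] V →ₗ[ℚ] ℚ,
        (∀ x y, b x y = b y x) ∧
        (∀ (w : W) (x y : V), b (w • x) (w • y) = b x y) ∧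
        (∀ x ∈ Λ, ∀ y ∈ Λ, IsIntQ (b x y)) ∧
        (∀ x ∈ Λ, pab x = 0 → ∃ m : ℤ, b x x = 2 * m) ∧
        ∀ x y, b (pss x) (pss y) = c x y) := by
  have h : IsAbSsSplitting W pab pss := ⟨hsum, habss, hWtriv, hWeq, hfix⟩
  refine ⟨fun b _ hfac _ => ⟨h.pullback_smul hfac, fun x _ hx => ⟨0, by simp [hfac x x, hx]⟩⟩,
    fun b hsym hW _ _ => h.form_pss_eq_zero_iff hsym hW,
    fun b hsym hW hint heven => ⟨fun x hx hx0 y hy => ?_, fun x hx hx0 => ?_⟩,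
    fun c hc hsym hW hint heven => h.exists_form_pss_eq Λ hc hsym hW hint heven⟩
  · rw [h.form_pss_right hsym hW hx0]
    exact hint x hx y hy
  · rw [h.pss_eq_self hx0]
    exact heven x hx hx0

/-- The short exact sequence
`0 → Bil^s(Λ(G^{ab})) → Bil^{s,D-ev}(Λ(T_G))^{W_G} → Bil^{s,ev}(Λ(T_{D(G)})|Λ(T_{G^{ss}}))^{W_G} → 0`
for a reductive group `G`, encoded as follows.  `V = Λ(T_G)_ℚ` carries a linear action of
the finite Weyl group `W`, with `W`-equivariant projections `pab`, `pss` onto the abelian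
and semisimple parts of the canonical splitting; `Λ ⊆ V` is the cocharacter lattice,
`Λ_D = Λ ∩ ker(pab)` and `Λ_ss = pss(Λ)`.  The first map is pull-back of forms along
`pab` and the second is restriction of forms to the semisimple part; the claims are:
(i) pulled-back forms land in the middle group, (ii) the kernel of restriction equals the
image of pull-back, (iii) restrictions of middle forms are even on `Λ_D` and integral on
`Λ_D ⊗ Λ_ss`, and (iv) the restriction map is surjective onto the right-hand group. -/
theorem stmt6 (W V : Type*) [Group W] [Finite W]
    [AddCommGroup V] [Module ℚ V]
    [DistribMulAction W V] [SMulCommClass W ℚ V]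
    (Λ : Submodule ℤ V) [Module.Free ℤ Λ] [Module.Finite ℤ Λ]
    (hspan : Submodule.span ℚ (Λ : Set V) = ⊤)
    (hΛW : ∀ (w : W), ∀ x ∈ Λ, w • x ∈ Λ)
    (pab pss : V →ₗ[ℚ] V)
    (hsum : ∀ v, pab v + pss v = v)
    (hab2 : ∀ v, pab (pab v) = pab v)
    (habss : ∀ v, pab (pss v) = 0)
    (hssab : ∀ v, pss (pab v) = 0)
    (hWtriv : ∀ (w : W) (v : V), w • pab v = pab v)
    (hWeq : ∀ (w : W) (v : V), pss (w • v) = w • pss v)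
    (hfix : ∀ v : V, (∀ w : W, w • v = v) → pss v = 0)
    (hcomm : ∀ x ∈ Λ, ∃ N : ℤ, N ≠ 0 ∧ N • pss x ∈ Λ) :
    -- (i) pull-backs of integral symmetric forms on Λ(G^{ab}) land in the middle group
    (∀ b : V →ₗ[ℚ] V →ₗ[ℚ] ℚ,
      (∀ x y, b x y = b y x) → (∀ x y, b x y = b (pab x) (pab y)) →
      (∀ x ∈ Λ, ∀ y ∈ Λ, IsIntQ (b x y)) →
      ((∀ (w : W) (x y : V), b (w • x) (w • y) = b x y) ∧
        ∀ x ∈ Λ, pab x = 0 → ∃ m : ℤ, b x x = 2 * m)) ∧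
    -- (ii) exactness in the middle: restriction vanishes iff the form is a pull-back
    (∀ b : V →ₗ[ℚ] V →ₗ[ℚ] ℚ,
      (∀ x y, b x y = b y x) →
      (∀ (w : W) (x y : V), b (w • x) (w • y) = b x y) →
      (∀ x ∈ Λ, ∀ y ∈ Λ, IsIntQ (b x y)) →
      (∀ x ∈ Λ, pab x = 0 → ∃ m : ℤ, b x x = 2 * m) →
      ((∀ x y, b (pss x) (pss y) = 0) ↔ ∀ x y, b x y = b (pab x) (pab y))) ∧
    -- (iii) the restriction of a middle form is even on Λ_D and integral on Λ_D ⊗ Λ_ss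
    (∀ b : V →ₗ[ℚ] V →ₗ[ℚ] ℚ,
      (∀ x y, b x y = b y x) →
      (∀ (w : W) (x y : V), b (w • x) (w • y) = b x y) →
      (∀ x ∈ Λ, ∀ y ∈ Λ, IsIntQ (b x y)) →
      (∀ x ∈ Λ, pab x = 0 → ∃ m : ℤ, b x x = 2 * m) →
      ((∀ x ∈ Λ, pab x = 0 → ∀ y ∈ Λ, IsIntQ (b x (pss y))) ∧
        ∀ x ∈ Λ, pab x = 0 → ∃ m : ℤ, b (pss x) (pss x) = 2 * m)) ∧
    -- (iv) surjectivity of the restriction map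
    (∀ c : V →ₗ[ℚ] V →ₗ[ℚ] ℚ,
      (∀ x y, c x y = c (pss x) (pss y)) →
      (∀ x y, c x y = c y x) →
      (∀ (w : W) (x y : V), c (w • x) (w • y) = c x y) →
      (∀ x ∈ Λ, pab x = 0 → ∀ y ∈ Λ, IsIntQ (c x (pss y))) →
      (∀ x ∈ Λ, pab x = 0 → ∃ m : ℤ, c x x = 2 * m) →
      ∃ b : V →ₗ[ℚ] V →ₗ[ℚ] ℚ,
        (∀ x y, b x y = b y x) ∧
        (∀ (w : W) (x y : V), b (w • x) (w • y) = b x y) ∧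
        (∀ x ∈ Λ, ∀ y ∈ Λ, IsIntQ (b x y)) ∧
        (∀ x ∈ Λ, pab x = 0 → ∃ m : ℤ, b x x = 2 * m) ∧
        ∀ x y, b (pss x) (pss y) = c x y) :=
  stmt6_general W V Λ pab pss hsum habss hWtriv hWeq hfix
end

section
/- Let n ≥ 2 and r, s positive integers with r | s and s | n. Set Λ_r = Q(A_{n−1}^∨) + ⟨(n/r)ω_1⟩ and Λ_s = Q(A_{n−1}^∨) + ⟨(n/s)ω_1⟩, where ω_1 = ε_1 − (Σ_i ε_i)/n. An integer multiple α(−,−) of the standard scalar product (restricted from V(A_{n−1})) has rational extension integral on Λ_r ⊗ Λ_s if and only if lcm(rs,n)/n divides α. Hence the lattice of S_n-invariant even symmetric integral bilinear forms on Q(A_{n−1}^∨) whose rational extension is integral on Λ_r ⊗ Λ_s... equals ⟨(lcm(rs,n)/n)·(−,−)⟩ after intersecting with the sc-even condition. -/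
/-- The `i`-th standard basis vector `ε_i` of `ℚ^n`. -/
def stdBasisQ (n : ℕ) (i : Fin n) : Fin n → ℚ := fun k => if k = i then 1 else 0

/-- The coroot lattice `Q(A_{n−1}^∨)`, generated by the elements `ε_i − ε_j`. -/
def rootLatticeA (n : ℕ) : Submodule ℤ (Fin n → ℚ) :=
  Submodule.span ℤ {v : Fin n → ℚ | ∃ i j : Fin n, v = stdBasisQ n i - stdBasisQ n j}

/-- The fundamental coweight `ω_1 = ε_1 − (Σ_i ε_i)/n`. -/
def omegaOne (n : ℕ) : Fin n → ℚ := fun k => (if (k : ℕ) = 0 then 1 else 0) - 1 / n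

/-- `Λ_r = Q(A_{n−1}^∨) + ⟨(n/r)ω_1⟩`, the cocharacter lattice of the maximal torus of
`SL_n/μ_r`. -/
def latticeSL (n r : ℕ) : Submodule ℤ (Fin n → ℚ) :=
  rootLatticeA n ⊔ Submodule.span ℤ {((n : ℚ) / r) • omegaOne n}

/-!
Integrality of `α(−,−)` on `Λ_r × Λ_s` only has to be checked on generators. A root `ε_i − ε_j`
pairs with a vector `v` to `v_i − v_j`, which is an integer for every generator of `Λ_t` because
`t ∣ n`. So the only condition comes from the two coweight generators:
`α (n/r)(n/s)(ω_1, ω_1) = α n(n−1)/(rs) ∈ ℤ`, i.e. `rs ∣ α n (n−1)`. Since `r` and `s` divide `n`,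
`rs` is prime to `n − 1`, leaving `rs ∣ α n`, i.e. `lcm(rs, n)/n ∣ α`.
-/

open Matrix Submodule

theorem forall_mem_span_apply₂_mem_iff {R M N P : Type*} [CommSemiring R] [AddCommMonoid M]
    [AddCommMonoid N] [AddCommMonoid P] [Module R M] [Module R N] [Module R P]
    (f : M →ₗ[R] N →ₗ[R] P) (s : Set M) (t : Set N) (L : Submodule R P) :
    (∀ x ∈ span R s, ∀ y ∈ span R t, f x y ∈ L) ↔ ∀ x ∈ s, ∀ y ∈ t, f x y ∈ L := by
  rw [← map₂_le, map₂_span_span, span_le, Set.image2_subset_iff]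
  rfl

theorem mem_one_iff_exists_intCast {q : ℚ} : q ∈ (1 : Submodule ℤ ℚ) ↔ ∃ m : ℤ, q = m := by
  simp [mem_one, eq_comm]

theorem intCast_div_mem_one_iff {a d : ℤ} (hd : d ≠ 0) :
    (a : ℚ) / d ∈ (1 : Submodule ℤ ℚ) ↔ d ∣ a := by
  rw [mem_one_iff_exists_intCast]
  constructor
  · rintro ⟨m, hm⟩
    refine ⟨m, Int.cast_injective (α := ℚ) ?_⟩
    rw [div_eq_iff (by exact_mod_cast hd)] at hm
    push_cast
    linear_combination hm
  · rintro ⟨m, rfl⟩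
    exact ⟨m, by push_cast; field_simp⟩

theorem Int.natCast_dvd_mul_natCast_iff_lcm_div_dvd {a b : ℕ} (hb : 0 < b) (α : ℤ) :
    (a : ℤ) ∣ α * b ↔ ((Nat.lcm a b / b : ℕ) : ℤ) ∣ α := by
  rw [Int.natCast_dvd, Int.natCast_dvd, Int.natAbs_mul, Int.natAbs_natCast,
    Nat.div_dvd_iff_dvd_mul (Nat.dvd_lcm_right a b) hb, Nat.lcm_dvd_iff, mul_comm b α.natAbs]
  exact (and_iff_left (dvd_mul_left _ _)).symm

def latticeSLGens (n t : ℕ) : Set (Fin n → ℚ) :=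
  {v | ∃ i j : Fin n, v = stdBasisQ n i - stdBasisQ n j} ∪ {((n : ℚ) / t) • omegaOne n}

theorem latticeSL_eq_span (n t : ℕ) : latticeSL n t = span ℤ (latticeSLGens n t) := by
  rw [latticeSL, rootLatticeA, latticeSLGens, span_union]

theorem stdBasisQ_sub_dotProduct {n : ℕ} (i j : Fin n) (v : Fin n → ℚ) :
    (stdBasisQ n i - stdBasisQ n j) ⬝ᵥ v = v i - v j := by
  simp only [sub_dotProduct]
  simp [dotProduct, stdBasisQ]

theorem sub_mem_one_of_mem_latticeSLGens {n t : ℕ} (ht : t ∣ n) {g : Fin n → ℚ}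
    (hg : g ∈ latticeSLGens n t) (i j : Fin n) : g i - g j ∈ (1 : Submodule ℤ ℚ) := by
  rw [mem_one_iff_exists_intCast]
  rcases hg with ⟨k, l, rfl⟩ | rfl
  · refine ⟨(if i = k then 1 else 0) - (if i = l then 1 else 0)
      - ((if j = k then 1 else 0) - (if j = l then 1 else 0)), ?_⟩
    simp only [Pi.sub_apply, stdBasisQ]
    push_cast
    rfl
  · refine ⟨(n / t : ℕ) * ((if (i : ℕ) = 0 then 1 else 0) - (if (j : ℕ) = 0 then 1 else 0)), ?_⟩
    simp only [Pi.smul_apply, omegaOne, smul_eq_mul, Int.cast_mul, Int.cast_natCast,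
      Nat.cast_div_charZero ht]
    push_cast
    ring

theorem sum_omegaOne {n : ℕ} (hn : n ≠ 0) : ∑ k, omegaOne n k = 0 := by
  have : NeZero n := ⟨hn⟩
  simp [omegaOne, Finset.sum_sub_distrib, Fin.val_eq_zero_iff]

theorem omegaOne_dotProduct_self {n : ℕ} (hn : n ≠ 0) : omegaOne n ⬝ᵥ omegaOne n = 1 - 1 / n := by
  have : NeZero n := ⟨hn⟩
  have key : ∀ k, omegaOne n k * omegaOne n k
      = omegaOne n k * (if k = 0 then 1 else 0) - omegaOne n k * (1 / n) := by
    intro k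
    rw [← mul_sub]
    simp [omegaOne, Fin.val_eq_zero_iff]
  rw [dotProduct, Finset.sum_congr rfl fun k _ => key k, Finset.sum_sub_distrib,
    ← Finset.sum_mul, sum_omegaOne hn]
  simp [omegaOne]

theorem forall_latticeSL_dotProduct_mem_one_iff {n r s : ℕ} (hr : r ∣ n) (hs : s ∣ n) (α : ℤ) :
    (∀ x ∈ latticeSL n r, ∀ y ∈ latticeSL n s, (α : ℚ) * (x ⬝ᵥ y) ∈ (1 : Submodule ℤ ℚ)) ↔
      (α : ℚ) * ((n : ℚ) / r * ((n : ℚ) / s) * (omegaOne n ⬝ᵥ omegaOne n))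
        ∈ (1 : Submodule ℤ ℚ) := by
  have hgens := forall_mem_span_apply₂_mem_iff (α • dotProductBilin ℤ ℤ) (latticeSLGens n r)
    (latticeSLGens n s) 1
  simp only [LinearMap.smul_apply, dotProductBilin_apply_apply, zsmul_eq_mul] at hgens
  rw [latticeSL_eq_span, latticeSL_eq_span, hgens]
  have hω : (((n : ℚ) / r) • omegaOne n) ⬝ᵥ (((n : ℚ) / s) • omegaOne n)
      = (n : ℚ) / r * ((n : ℚ) / s) * (omegaOne n ⬝ᵥ omegaOne n) := by
    rw [smul_dotProduct, dotProduct_smul, smul_eq_mul, smul_eq_mul]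
    ring
  refine ⟨fun h => hω ▸ h _ (Or.inr rfl) _ (Or.inr rfl), ?_⟩
  simp only [← zsmul_eq_mul]
  rintro hωω x (⟨i, j, rfl⟩ | rfl) y hy
  · rw [stdBasisQ_sub_dotProduct]
    exact smul_mem _ α (sub_mem_one_of_mem_latticeSLGens hs hy i j)
  · rcases hy with ⟨i, j, rfl⟩ | rfl
    · rw [dotProduct_comm, stdBasisQ_sub_dotProduct]
      exact smul_mem _ α (sub_mem_one_of_mem_latticeSLGens hr (Or.inr rfl) i j)
    · rwa [hω]

theorem intCast_mul_mem_one_iff_lcm_div_dvd {n r s : ℕ} (hn : n ≠ 0) (hr : r ∣ n) (hs : s ∣ n)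
    (α : ℤ) :
    (α : ℚ) * ((n : ℚ) / r * ((n : ℚ) / s) * (1 - 1 / n)) ∈ (1 : Submodule ℤ ℚ) ↔
      ((Nat.lcm (r * s) n / n : ℕ) : ℤ) ∣ α := by
  have hr0 : r ≠ 0 := ne_zero_of_dvd_ne_zero hn hr
  have hs0 : s ≠ 0 := ne_zero_of_dvd_ne_zero hn hs
  have hcop : IsCoprime ((r * s : ℕ) : ℤ) (n - 1) := by
    have hn1 : IsCoprime (n : ℤ) (n - 1) := ⟨1, -1, by ring⟩
    push_cast
    exact (hn1.of_isCoprime_of_dvd_left (Int.natCast_dvd_natCast.2 hr)).mul_left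
      (hn1.of_isCoprime_of_dvd_left (Int.natCast_dvd_natCast.2 hs))
  have hval : (α : ℚ) * ((n : ℚ) / r * ((n : ℚ) / s) * (1 - 1 / n))
      = ((α * n * (n - 1) : ℤ) : ℚ) / ((r * s : ℕ) : ℤ) := by
    push_cast
    field_simp
  rw [hval, intCast_div_mem_one_iff (by positivity),
    ← Int.natCast_dvd_mul_natCast_iff_lcm_div_dvd (Nat.pos_of_ne_zero hn)]
  exact ⟨hcop.dvd_of_dvd_mul_right, fun h => h.mul_right _⟩

theorem stmt9_general (n r s : ℕ) (hn : 2 ≤ n) (hrs : r ∣ s) (hsn : s ∣ n)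
    (α : ℤ) :
    (∀ x ∈ latticeSL n r, ∀ y ∈ latticeSL n s,
        ∃ m : ℤ, (α : ℚ) * ∑ i, x i * y i = (m : ℚ)) ↔
      ((Nat.lcm (r * s) n / n : ℕ) : ℤ) ∣ α := by
  have hn0 : n ≠ 0 := by omega
  simp only [← mem_one_iff_exists_intCast]
  rw [← intCast_mul_mem_one_iff_lcm_div_dvd hn0 (hrs.trans hsn) hsn,
    ← omegaOne_dotProduct_self hn0]
  exact forall_latticeSL_dotProduct_mem_one_iff (hrs.trans hsn) hsn α

/-- For `r | s | n`, the multiple `α(−,−)` of the standard scalar product has rational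
extension integral on `Λ_r ⊗ Λ_s` if and only if `lcm(rs,n)/n` divides `α`. -/
theorem stmt9 (n r s : ℕ) (hn : 2 ≤ n) (hr : 0 < r) (hrs : r ∣ s) (hsn : s ∣ n)
    (α : ℤ) :
    (∀ x ∈ latticeSL n r, ∀ y ∈ latticeSL n s,
        ∃ m : ℤ, (α : ℚ) * ∑ i, x i * y i = (m : ℚ)) ↔
      ((Nat.lcm (r * s) n / n : ℕ) : ℤ) ∣ α :=
  stmt9_general n r s hn hrs hsn α
end

section
/- Let l ≥ 2, ω_l = (ε_1+…+ε_l)/2 ∈ ℝ^l, and P = ℤ^l + ⟨ω_l⟩ (the coweight lattice of C_l, i.e. the cocharacter lattice of PSp_{2l}). For α ∈ ℤ, the form 2α(−,−) is integral on P⊗P if and only if 2 | α·l; and 2α(−,−) is even on P if and only if 4 | α·l. Consequently: the lattice of even W-invariant integral forms on P is generated by 2(−,−) if 4 | l, by 4(−,−) if l ≡ 2 (mod 4), and by 8(−,−) if l is odd. -/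
/-- The coweight lattice `P(C_l^∨) = ℤ^l + ⟨ω_l⟩` with `ω_l = (ε_1+…+ε_l)/2`
(cocharacter lattice of `PSp_{2l}`). -/
def halfSumLattice (l : ℕ) : Set (Fin l → ℚ) :=
  {ξ | ∃ (m : Fin l → ℤ) (k : ℤ), ∀ i, ξ i = (m i : ℚ) + k * (1 / 2)}

/-- Invariance of a bilinear form under the signed permutation group
`W = (ℤ/2)^l ⋊ S_l`, tested on a set `S`. -/
def SignedPermInv (l : ℕ) (S : Set (Fin l → ℚ))
    (b : (Fin l → ℚ) →ₗ[ℚ] (Fin l → ℚ) →ₗ[ℚ] ℚ) : Prop :=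
  ∀ (σ : Equiv.Perm (Fin l)) (ε : Fin l → ℚ), (∀ i, ε i = 1 ∨ ε i = -1) →
    ∀ x ∈ S, ∀ y ∈ S, b (fun i => ε i * x (σ i)) (fun i => ε i * y (σ i)) = b x y

/-- The generator multiple for the even `W`-invariant forms on `P(C_l^∨)`:
`2` if `4 | l`, `4` if `l ≡ 2 (mod 4)`, `8` if `l` is odd. -/
def genPSp (l : ℕ) : ℚ := if l % 4 = 0 then 2 else if l % 2 = 0 then 4 else 8

lemma omegaMem (l : ℕ) : (fun _ => (1/2 : ℚ)) ∈ halfSumLattice l :=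
  ⟨0, 1, fun i => by norm_num⟩

def EE (l : ℕ) (i : Fin l) : Fin l → ℚ := fun j => if i = j then 1 else 0

lemma EEMem (l : ℕ) (i : Fin l) : EE l i ∈ halfSumLattice l :=
  ⟨fun j => if i = j then 1 else 0, 0, fun j => by by_cases h : i = j <;> simp [EE, h]⟩

lemma sumOmega (l : ℕ) :
    (∑ _i : Fin l, (1/2 : ℚ) * (1/2)) = (l : ℚ) / 4 := by
  simp [Finset.sum_const, Finset.card_univ]
  ring

lemma int_of_two_dvd (l : ℕ) (α : ℤ) (h : (2:ℤ) ∣ α * l) :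
    ∀ x ∈ halfSumLattice l, ∀ y ∈ halfSumLattice l,
      ∃ m : ℤ, 2 * (α : ℚ) * ∑ i, x i * y i = (m : ℚ) := by
  rintro x ⟨m, k, hx⟩ y ⟨n, j, hy⟩
  obtain ⟨t, ht⟩ := h
  refine ⟨2*α*(∑ i, m i * n i) + α*k*(∑ i, n i) + α*j*(∑ i, m i) + t*k*j, ?_⟩
  have hsum : ∑ i, x i * y i
      = (∑ i, (m i : ℚ) * (n i : ℚ)) + (k:ℚ)/2 * (∑ i, (n i : ℚ))
        + (j:ℚ)/2 * (∑ i, (m i : ℚ)) + (l:ℚ) * k * j / 4 := by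
    have h1 : ∀ i ∈ Finset.univ, x i * y i
        = (m i : ℚ) * (n i : ℚ) + (k:ℚ)/2 * (n i : ℚ) + (j:ℚ)/2 * (m i : ℚ)
          + (k:ℚ)*(j:ℚ)/4 := by
      intro i _; rw [hx i, hy i]; ring
    rw [Finset.sum_congr rfl h1]
    simp [Finset.sum_add_distrib, ← Finset.mul_sum, Finset.sum_const, Finset.card_univ]
    ring
  rw [hsum]
  have hc : (α : ℚ) * l = 2 * t := by exact_mod_cast ht
  push_cast
  linear_combination ((k:ℚ) * (j:ℚ) / 2) * hc

lemma even_of_four_dvd (l : ℕ) (α : ℤ) (h : (4:ℤ) ∣ α * l) :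
    ∀ x ∈ halfSumLattice l,
      ∃ m : ℤ, 2 * (α : ℚ) * ∑ i, x i * x i = 2 * (m : ℚ) := by
  rintro x ⟨m, k, hx⟩
  obtain ⟨t, ht⟩ := h
  refine ⟨α*(∑ i, m i * m i) + α*k*(∑ i, m i) + t*k*k, ?_⟩
  have hsum : ∑ i, x i * x i
      = (∑ i, (m i : ℚ) * (m i : ℚ)) + (k:ℚ) * (∑ i, (m i : ℚ))
        + (l:ℚ) * k * k / 4 := by
    have h1 : ∀ i ∈ Finset.univ, x i * x i
        = (m i : ℚ) * (m i : ℚ) + (k:ℚ) * (m i : ℚ) + (k:ℚ)*(k:ℚ)/4 := by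
      intro i _; rw [hx i]; ring
    rw [Finset.sum_congr rfl h1]
    simp [Finset.sum_add_distrib, ← Finset.mul_sum, Finset.sum_const, Finset.card_univ]
    ring
  rw [hsum]
  have hc : (α : ℚ) * l = 4 * t := by exact_mod_cast ht
  push_cast
  linear_combination ((k:ℚ) * (k:ℚ) / 2) * hc

lemma forward_int (l : ℕ) (α : ℤ)
    (h : ∃ m : ℤ, 2 * (α : ℚ) * ∑ i : Fin l, (1/2 : ℚ) * (1/2) = (m : ℚ)) :
    (2 : ℤ) ∣ α * l := by
  obtain ⟨m, hm⟩ := h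
  rw [sumOmega] at hm
  have : (α : ℚ) * l = 2 * m := by linear_combination 2 * hm
  exact ⟨m, by exact_mod_cast this⟩

lemma forward_even (l : ℕ) (α : ℤ)
    (h : ∃ m : ℤ, 2 * (α : ℚ) * ∑ i : Fin l, (1/2 : ℚ) * (1/2) = 2 * (m : ℚ)) :
    (4 : ℤ) ∣ α * l := by
  obtain ⟨m, hm⟩ := h
  rw [sumOmega] at hm
  have : (α : ℚ) * l = 4 * m := by linear_combination 2 * hm
  exact ⟨m, by exact_mod_cast this⟩

lemma two_dvd_of_mul_odd {m t : ℤ} (hodd : ¬ (2 ∣ t)) (h : 2 ∣ m * t) : 2 ∣ m := by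
  rcases (Int.prime_two.dvd_mul.mp h) with h' | h'
  · exact h'
  · exact absurd h' hodd


lemma rep (l : ℕ) (x : Fin l → ℚ) : x = ∑ i, x i • EE l i := pi_eq_sum_univ x

lemma bdiag (l : ℕ) (b : (Fin l → ℚ) →ₗ[ℚ] (Fin l → ℚ) →ₗ[ℚ] ℚ)
    (hW : SignedPermInv l (halfSumLattice l) b) (i i0 : Fin l) :
    b (EE l i) (EE l i) = b (EE l i0) (EE l i0) := by
  have h := hW (Equiv.swap i i0) (fun _ => 1) (fun _ => Or.inl rfl)
    (EE l i) (EEMem l i) (EE l i) (EEMem l i)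
  have htr : (fun t => (1:ℚ) * (EE l i) ((Equiv.swap i i0) t)) = EE l i0 := by
    funext t
    rw [one_mul]
    have hiff : (i = Equiv.swap i i0 t) ↔ (i0 = t) := by
      rw [show Equiv.swap i i0 t = (Equiv.swap i i0).symm t from by
        rw [Equiv.symm_swap], Equiv.eq_symm_apply, Equiv.swap_apply_left]
    show (if i = Equiv.swap i i0 t then (1:ℚ) else 0) = if i0 = t then 1 else 0
    simp only [hiff]
  rw [htr] at h
  exact h.symm

lemma boff (l : ℕ) (b : (Fin l → ℚ) →ₗ[ℚ] (Fin l → ℚ) →ₗ[ℚ] ℚ)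
    (hW : SignedPermInv l (halfSumLattice l) b) (i j : Fin l) (hij : i ≠ j) :
    b (EE l i) (EE l j) = 0 := by
  classical
  set ε : Fin l → ℚ := fun t => if t = i then -1 else 1 with hε
  have h := hW (Equiv.refl (Fin l)) ε
    (fun t => by by_cases h : t = i <;> simp [hε, h])
    (EE l i) (EEMem l i) (EE l j) (EEMem l j)
  have h1 : (fun t => ε t * (EE l i) ((Equiv.refl (Fin l)) t)) = -(EE l i) := by
    funext t
    by_cases h2 : t = i
    · subst h2; simp [hε, EE]
    · have h4 : ¬ i = t := fun h => h2 h.symm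
      simp [hε, h2, EE, h4]
  have h2 : (fun t => ε t * (EE l j) ((Equiv.refl (Fin l)) t)) = EE l j := by
    funext t
    by_cases h3 : t = i
    · subst h3
      have h5 : ¬ j = t := fun h => hij h.symm
      simp [hε, EE, h5]
    · simp [hε, h3]
  rw [h1, h2, map_neg, LinearMap.neg_apply] at h
  linarith

lemma bform (l : ℕ) (b : (Fin l → ℚ) →ₗ[ℚ] (Fin l → ℚ) →ₗ[ℚ] ℚ)
    (hW : SignedPermInv l (halfSumLattice l) b) (i0 : Fin l) (x y : Fin l → ℚ) :
    b x y = b (EE l i0) (EE l i0) * ∑ i, x i * y i := by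
  classical
  have expand : b x y = ∑ i, ∑ j, x i * y j * b (EE l i) (EE l j) := by
    conv_lhs => rw [rep l x, rep l y]
    simp only [map_sum, map_smul, LinearMap.sum_apply, LinearMap.smul_apply,
      smul_eq_mul, Finset.mul_sum]
    rw [Finset.sum_comm]
    refine Finset.sum_congr rfl fun i _ => Finset.sum_congr rfl fun j _ => by ring
  rw [expand, Finset.mul_sum]
  refine Finset.sum_congr rfl fun i _ => ?_
  rw [Finset.sum_eq_single i]
  · rw [bdiag l b hW i i0]; ring
  · intro j _ hj
    rw [boff l b hW i j (Ne.symm hj)]; ring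
  · intro h; exact absurd (Finset.mem_univ i) h


/-- For `P = ℤ^l + ⟨ω_l⟩` and `α ∈ ℤ`: `2α(−,−)` is integral on `P⊗P` iff `2 | αl`, and
`2α(−,−)` is even on `P` iff `4 | αl`.  Consequently the lattice of even `W`-invariant
integral symmetric forms on `P` is generated by `2(−,−)` if `4 | l`, by `4(−,−)` if
`l ≡ 2 (mod 4)`, and by `8(−,−)` if `l` is odd. -/
theorem stmt12 (l : ℕ) (hl : 2 ≤ l) :
    (∀ α : ℤ,
      (∀ x ∈ halfSumLattice l, ∀ y ∈ halfSumLattice l,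
          ∃ m : ℤ, 2 * (α : ℚ) * ∑ i, x i * y i = (m : ℚ)) ↔ (2 : ℤ) ∣ α * l) ∧
    (∀ α : ℤ,
      (∀ x ∈ halfSumLattice l,
          ∃ m : ℤ, 2 * (α : ℚ) * ∑ i, x i * x i = 2 * (m : ℚ)) ↔ (4 : ℤ) ∣ α * l) ∧
    (∀ x ∈ halfSumLattice l, ∀ y ∈ halfSumLattice l,
        ∃ m : ℤ, genPSp l * ∑ i, x i * y i = (m : ℚ)) ∧
    (∀ x ∈ halfSumLattice l, ∃ m : ℤ, genPSp l * ∑ i, x i * x i = 2 * (m : ℚ)) ∧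
    (∀ b : (Fin l → ℚ) →ₗ[ℚ] (Fin l → ℚ) →ₗ[ℚ] ℚ,
      (∀ x ∈ halfSumLattice l, ∀ y ∈ halfSumLattice l, b x y = b y x) →
      SignedPermInv l (halfSumLattice l) b →
      (∀ x ∈ halfSumLattice l, ∀ y ∈ halfSumLattice l, ∃ m : ℤ, b x y = (m : ℚ)) →
      (∀ x ∈ halfSumLattice l, ∃ m : ℤ, b x x = 2 * (m : ℚ)) →
      ∃ c : ℤ, ∀ x ∈ halfSumLattice l, ∀ y ∈ halfSumLattice l,
        b x y = c * (genPSp l * ∑ i, x i * y i)) := by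
  have i0 : Fin l := ⟨0, by omega⟩
  obtain ⟨α₀, hα₀, hdvd⟩ : ∃ α₀ : ℤ, genPSp l = 2 * (α₀ : ℚ) ∧ (4:ℤ) ∣ α₀ * l := by
    by_cases h0 : l % 4 = 0
    · exact ⟨1, by norm_num [genPSp, h0], by omega⟩
    · by_cases h2 : l % 2 = 0
      · exact ⟨2, by norm_num [genPSp, h0, h2], by omega⟩
      · exact ⟨4, by norm_num [genPSp, h0, h2], by omega⟩
  refine ⟨?_, ?_, ?_, ?_, ?_⟩
  · intro α
    constructor
    · intro h
      exact forward_int l α (h _ (omegaMem l) _ (omegaMem l))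
    · intro h; exact int_of_two_dvd l α h
  · intro α
    constructor
    · intro h
      exact forward_even l α (h _ (omegaMem l))
    · intro h; exact even_of_four_dvd l α h
  · intro x hx y hy
    obtain ⟨m, hm⟩ := int_of_two_dvd l α₀ (dvd_trans ⟨2, rfl⟩ hdvd) x hx y hy
    exact ⟨m, by rw [hα₀]; exact hm⟩
  · intro x hx
    obtain ⟨m, hm⟩ := even_of_four_dvd l α₀ hdvd x hx
    exact ⟨m, by rw [hα₀]; exact hm⟩
  · intro b hsym hW hint heven
    obtain ⟨m, hm⟩ := heven (EE l i0) (EEMem l i0)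
    obtain ⟨m', hm'⟩ := heven (fun _ => (1/2:ℚ)) (omegaMem l)
    rw [bform l b hW i0] at hm hm'
    rw [sumOmega] at hm'
    have hs : (∑ i, EE l i0 i * EE l i0 i) = 1 := by
      simp [EE]
    rw [hs, mul_one] at hm
    have hml : m * (l:ℤ) = 4 * m' := by
      have : (m:ℚ) * l = 4 * m' := by
        linear_combination 2 * hm' - ((l:ℚ)/2) * hm
      exact_mod_cast this
    obtain ⟨c, hc⟩ : ∃ c : ℤ, b (EE l i0) (EE l i0) = (c:ℚ) * genPSp l := by
      by_cases h0 : l % 4 = 0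
      · refine ⟨m, ?_⟩
        rw [show genPSp l = 2 by norm_num [genPSp, h0]]
        linarith [hm]
      · by_cases h2 : l % 2 = 0
        · obtain ⟨t, ht, htodd⟩ : ∃ t : ℤ, (l:ℤ) = 2*t ∧ ¬ ((2:ℤ) ∣ t) :=
            ⟨(l:ℤ)/2, by omega, by omega⟩
          have key : m * t = 2 * m' := by
            have h2' : (2:ℤ) * (m*t) = 2 * (2*m') := by
              linear_combination hml - m * ht
            exact mul_left_cancel₀ two_ne_zero h2'
          obtain ⟨c, hc2⟩ := two_dvd_of_mul_odd htodd ⟨m', key⟩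
          refine ⟨c, ?_⟩
          rw [show genPSp l = 4 by norm_num [genPSp, h0, h2]]
          have : (m:ℚ) = 2*c := by exact_mod_cast hc2
          linarith [hm]
        · have hlodd : ¬ ((2:ℤ) ∣ (l:ℤ)) := by omega
          obtain ⟨m2, hm2⟩ := two_dvd_of_mul_odd (m := m) hlodd ⟨2*m', by linarith [hml]⟩
          have key : m2 * (l:ℤ) = 2 * m' := by
            have h2' : (2:ℤ) * (m2*(l:ℤ)) = 2 * (2*m') := by
              linear_combination hml - (l:ℤ) * hm2
            exact mul_left_cancel₀ two_ne_zero h2'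
          obtain ⟨c, hc2⟩ := two_dvd_of_mul_odd hlodd ⟨m', key⟩
          refine ⟨c, ?_⟩
          rw [show genPSp l = 8 by norm_num [genPSp, h0, h2]]
          have hq : (m:ℚ) = 2*(2*c) := by exact_mod_cast hm2.trans (by rw [hc2])
          linarith [hm]
    refine ⟨c, fun x hx y hy => ?_⟩
    rw [bform l b hW i0 x y, hc]; ring
end

section
/- For the root system E_7: with ω_7 = (2ε_6+ε_7−ε_8)/2 one has (ω_7,ω_7) = 3/2. Hence for α ∈ ℤ, α(−,−) is integral on (Q(E_7)+⟨ω_7⟩) ⊗ (Q(E_7)+⟨ω_7⟩) iff 2 | α, and α(−,−) is even on Q(E_7)+⟨ω_7⟩ iff 4 | α. Consequently the rank-one lattice of W(E_7)-invariant symmetric integral forms on the adjoint cocharacter lattice P(E_7^∨) is generated by 2(−,−), and the sublattice of even such forms is generated by 4(−,−), giving an index-2 inclusion with cokernel ℤ/2ℤ. -/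
/-- The `E_8` root lattice `Q(E_8) = {ξ ∈ ℤ^8 : (ξ,ξ) even} + ⟨(Σ_i ε_i)/2⟩`. -/
def QE8 : Set (Fin 8 → ℚ) :=
  {ξ | ∃ (x : Fin 8 → ℚ) (k : ℤ),
    (∀ i, ∃ m : ℤ, x i = (m : ℚ)) ∧ (∃ m : ℤ, ∑ i, x i * x i = 2 * (m : ℚ)) ∧
    ∀ i, ξ i = x i + k * (1 / 2)}

/-- The `E_7` (co)root lattice `Q(E_7) = Q(E_8) ∩ V(E_7)`, where
`V(E_7) = {ξ : ξ_8 = −ξ_7}`. -/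
def QE7 : Set (Fin 8 → ℚ) := {ξ ∈ QE8 | ξ 7 = -ξ 6}

/-- The fundamental (co)weight `ω_7 = (2ε_6 + ε_7 − ε_8)/2`. -/
def omega7 : Fin 8 → ℚ :=
  fun i => if i = 5 then 1 else if i = 6 then 1 / 2 else if i = 7 then -(1 / 2) else 0

/-- The `E_7` (co)weight lattice `P(E_7) = Q(E_7) + ⟨ω_7⟩` (the adjoint cocharacter
lattice `P(E_7^∨)`). -/
def PE7 : Set (Fin 8 → ℚ) := {ξ | ∃ q ∈ QE7, ∃ k : ℤ, ∀ i, ξ i = q i + k * omega7 i}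

/-- `α(−,−)` is integral on `S ⊗ S`. -/
def IntOnE8 (S : Set (Fin 8 → ℚ)) (α : ℤ) : Prop :=
  ∀ x ∈ S, ∀ y ∈ S, ∃ m : ℤ, (α : ℚ) * ∑ i, x i * y i = (m : ℚ)

/-- `α(−,−)` is even on `S`. -/
def EvenOnE8 (S : Set (Fin 8 → ℚ)) (α : ℤ) : Prop :=
  ∀ x ∈ S, ∃ m : ℤ, (α : ℚ) * ∑ i, x i * x i = 2 * (m : ℚ)

lemma zmod2_sq (a : ZMod 2) : a * a = a := by revert a; decide

lemma omega7_0 : omega7 0 = 0 := rfl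
lemma omega7_1 : omega7 1 = 0 := rfl
lemma omega7_2 : omega7 2 = 0 := rfl
lemma omega7_3 : omega7 3 = 0 := rfl
lemma omega7_4 : omega7 4 = 0 := rfl
lemma omega7_5 : omega7 5 = 1 := rfl
lemma omega7_6 : omega7 6 = 1/2 := rfl
lemma omega7_7 : omega7 7 = -(1/2) := rfl

lemma parity8 (m : Fin 8 → ℤ) (t : ℤ) (ht : ∑ i, m i * m i = 2 * t) :
    ∃ s : ℤ, ∑ i, m i = 2 * s := by
  have h : ((∑ i, m i : ℤ) : ZMod 2) = 0 := by
    have h0 := congrArg (Int.cast : ℤ → ZMod 2) ht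
    push_cast at h0 ⊢
    rw [Finset.sum_congr rfl (fun i _ => zmod2_sq ((m i : ZMod 2)))] at h0
    rw [h0]
    exact mul_eq_zero_of_left (by decide) _
  exact (ZMod.intCast_zmod_eq_zero_iff_dvd _ 2).mp h

lemma QE8_struct {q : Fin 8 → ℚ} (hq : q ∈ QE8) :
    ∃ (m : Fin 8 → ℤ) (k s : ℤ), (∑ i, m i = 2 * s) ∧ ∀ i, q i = m i + k * (1/2) := by
  obtain ⟨x, k, h1, ⟨t, ht⟩, h3⟩ := hq
  choose m hm using h1
  have hsum : ∑ i, ((m i : ℚ) * (m i : ℚ)) = 2 * t := by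
    rw [Finset.sum_congr rfl fun i _ => by rw [← hm i]]
    exact ht
  have hint : ∑ i, m i * m i = 2 * t := by exact_mod_cast hsum
  obtain ⟨s, hs⟩ := parity8 m t hint
  exact ⟨m, k, s, hs, fun i => by rw [h3 i, hm i]⟩

lemma QE8_pair_int {x y : Fin 8 → ℚ} (hx : x ∈ QE8) (hy : y ∈ QE8) :
    ∃ n : ℤ, ∑ i, x i * y i = n := by
  obtain ⟨m, k, s, hs, hm⟩ := QE8_struct hx
  obtain ⟨m', l, s', hs', hm'⟩ := QE8_struct hy
  refine ⟨∑ i, m i * m' i + l * s + k * s' + 2 * k * l, ?_⟩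
  have hxy : ∑ i, x i * y i
      = ∑ i, ((m i : ℚ) + k*(1/2)) * ((m' i : ℚ) + l*(1/2)) :=
    Finset.sum_congr rfl fun i _ => by rw [hm i, hm' i]
  have hsq : (∑ i, (m i : ℚ)) = 2*s := by exact_mod_cast hs
  have hsq' : (∑ i, (m' i : ℚ)) = 2*s' := by exact_mod_cast hs'
  rw [hxy]
  push_cast
  rw [Fin.sum_univ_eight, Fin.sum_univ_eight]
  rw [Fin.sum_univ_eight] at hsq hsq'
  linear_combination ((l:ℚ)/2) * hsq + ((k:ℚ)/2) * hsq'

lemma omega_pair {q : Fin 8 → ℚ} (hq : q ∈ QE7) : ∃ n : ℤ, ∑ i, omega7 i * q i = n := by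
  obtain ⟨hq8, h76⟩ := hq
  obtain ⟨m, k, s, hs, hm⟩ := QE8_struct hq8
  refine ⟨m 5 + m 6 + k, ?_⟩
  rw [Fin.sum_univ_eight]
  simp only [omega7_0, omega7_1, omega7_2, omega7_3, omega7_4, omega7_5, omega7_6, omega7_7]
  rw [h76, hm 5, hm 6]
  push_cast
  ring

lemma omega_self : ∑ i, omega7 i * omega7 i = 3/2 := by
  rw [Fin.sum_univ_eight]
  simp only [omega7_0, omega7_1, omega7_2, omega7_3, omega7_4, omega7_5, omega7_6, omega7_7]
  norm_num

lemma PE7_sum {x y q q' : Fin 8 → ℚ} {k l : ℤ}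
    (hq : q ∈ QE7) (hq' : q' ∈ QE7)
    (hx : ∀ i, x i = q i + k * omega7 i) (hy : ∀ i, y i = q' i + l * omega7 i) :
    ∃ n : ℤ, ∑ i, x i * y i = n + (k*l)*(3/2) := by
  obtain ⟨n1, hn1⟩ := QE8_pair_int hq.1 hq'.1
  obtain ⟨n2, hn2⟩ := omega_pair hq'
  obtain ⟨n3, hn3⟩ := omega_pair hq
  refine ⟨n1 + l * n3 + k * n2, ?_⟩
  have hq3 : ∑ i, q i * omega7 i = n3 := by
    rw [Finset.sum_congr rfl fun i _ => mul_comm (q i) (omega7 i)]; exact hn3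
  have expand : ∑ i, x i * y i
      = ∑ i, q i * q' i + l * ∑ i, q i * omega7 i + k * ∑ i, omega7 i * q' i
        + (k*l) * ∑ i, omega7 i * omega7 i := by
    rw [Finset.sum_congr rfl fun i _ => by rw [hx i, hy i]]
    simp only [Finset.mul_sum, ← Finset.sum_add_distrib]
    exact Finset.sum_congr rfl fun i _ => by push_cast; ring
  rw [expand, hn1, hq3, hn2, omega_self]
  push_cast; ring

lemma zero_mem_QE7 : (fun _ : Fin 8 => (0:ℚ)) ∈ QE7 :=
  ⟨⟨(fun _ => 0), 0, fun _ => ⟨0, by norm_num⟩, ⟨0, by simp⟩, fun _ => by norm_num⟩,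
    by norm_num⟩

lemma omega7_mem_PE7 : omega7 ∈ PE7 :=
  ⟨_, zero_mem_QE7, 1, fun i => by push_cast; ring⟩

lemma int2 : IntOnE8 PE7 2 := by
  rintro x ⟨q, hq, k, hx⟩ y ⟨q', hq', l, hy⟩
  obtain ⟨n, hn⟩ := PE7_sum hq hq' hx hy
  exact ⟨2*n + 3*(k*l), by rw [hn]; push_cast; ring⟩

lemma even4 : EvenOnE8 PE7 4 := by
  rintro x ⟨q, hq, k, hx⟩
  obtain ⟨n, hn⟩ := PE7_sum hq hq hx hx
  exact ⟨2*n + 3*(k*k), by rw [hn]; push_cast; ring⟩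

/-- For `E_7`: `(ω_7,ω_7) = 3/2`; `α(−,−)` is integral on `P(E_7^∨)⊗P(E_7^∨)` iff
`2 | α` and even on `P(E_7^∨)` iff `4 | α`; hence the invariant integral forms are
generated by `2(−,−)`, the even ones by `4(−,−)`, and the inclusion has index 2
(cokernel `ℤ/2ℤ`). -/
theorem stmt13 :
    (∑ i, omega7 i * omega7 i = 3 / 2) ∧
    (∀ α : ℤ, IntOnE8 PE7 α ↔ (2 : ℤ) ∣ α) ∧
    (∀ α : ℤ, EvenOnE8 PE7 α ↔ (4 : ℤ) ∣ α) ∧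
    (∃ α₀ : ℤ, IntOnE8 PE7 α₀ ∧ ¬ EvenOnE8 PE7 α₀ ∧
      ∀ α : ℤ, IntOnE8 PE7 α → (EvenOnE8 PE7 α ∨ EvenOnE8 PE7 (α - α₀))) := by
  have homega := omega7_mem_PE7
  have hIntIff : ∀ α : ℤ, IntOnE8 PE7 α ↔ (2:ℤ) ∣ α := by
    intro α
    constructor
    · intro h
      obtain ⟨m, hm⟩ := h omega7 homega omega7 homega
      rw [omega_self] at hm
      have h3 : (3*α : ℚ) = 2*m := by linarith
      have h3' : (3*α : ℤ) = 2*m := by exact_mod_cast h3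
      omega
    · rintro ⟨c, rfl⟩ x hx y hy
      obtain ⟨m, hm⟩ := int2 x hx y hy
      exact ⟨c*m, by push_cast; linear_combination (c:ℚ)*hm⟩
  have hEvenIff : ∀ α : ℤ, EvenOnE8 PE7 α ↔ (4:ℤ) ∣ α := by
    intro α
    constructor
    · intro h
      obtain ⟨m, hm⟩ := h omega7 homega
      rw [omega_self] at hm
      have h3 : (3*α : ℚ) = 4*m := by linarith
      have h3' : (3*α : ℤ) = 4*m := by exact_mod_cast h3
      omega
    · rintro ⟨c, rfl⟩ x hx
      obtain ⟨m, hm⟩ := even4 x hx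
      exact ⟨c*m, by push_cast; linear_combination (c:ℚ)*hm⟩
  refine ⟨omega_self, hIntIff, hEvenIff, 2, (hIntIff 2).mpr ⟨1, rfl⟩, ?_, ?_⟩
  · rw [hEvenIff]; omega
  · intro α h
    rw [hIntIff] at h
    rw [hEvenIff, hEvenIff]
    omega
end
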